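/- arXiv:1412.4058 — 9 statements merged into one kernel-verified Lean document; each statement's English description precedes it below -/
import Mathlib

section
/- Let G be a finite abelian group, h ≥ 2 an integer, and A ⊆ G a finite subset with |A| = m. If the h-fold sumset hA = {a₁ + ⋯ + a_h : aᵢ ∈ A} satisfies |hA| ≤ m, then A is a coset of a subgroup of G. -/
open Pointwise

theorem stmt0 {G : Type*} [AddCommGroup G] [Fintype G] [DecidableEq G]
    (h : ℕ) (hh : 2 ≤ h) (A : Finset G) (hA : A.Nonempty)
    (hcard : (h • A).card ≤ A.card) :
    ∃ (H : AddSubgroup G) (g : G), (A : Set G) = (fun x => g + x) '' (H : Set G) := by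
  obtain ⟨a, ha⟩ := hA
  -- |A+A| = |A|
  have h2 : (2 • A).card ≤ A.card :=
    le_trans (Finset.card_nsmul_mono (by norm_num) hh) hcard
  rw [two_nsmul] at h2
  have hge : A.card ≤ (A + A).card := Finset.card_le_card_add_right ⟨a, ha⟩
  have heq : (A + A).card = A.card := le_antisymm h2 hge
  -- a +ᵥ A = A + A
  have hsub : a +ᵥ A ⊆ A + A := by
    intro x hx
    rw [Finset.mem_vadd_finset] at hx
    obtain ⟨y, hy, rfl⟩ := hx
    exact Finset.add_mem_add ha hy
  have hvadd : a +ᵥ A = A + A :=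
    Finset.eq_of_subset_of_card_le hsub (by rw [Finset.card_vadd_finset, heq])
  -- H' = -a +ᵥ A
  set H' : Finset G := (-a) +ᵥ A with hH'
  have hmem : ∀ x, x ∈ H' ↔ a + x ∈ A := by
    intro x
    simp only [hH', Finset.mem_vadd_finset, vadd_eq_add]
    constructor
    · rintro ⟨y, hy, rfl⟩; simpa [add_comm, add_assoc, add_left_comm] using hy
    · intro hx; exact ⟨a + x, hx, by abel⟩
  have h0 : (0 : G) ∈ H' := by rw [hmem]; simpa using ha
  have hadd : ∀ x ∈ H', ∀ y ∈ H', x + y ∈ H' := by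
    intro x hx y hy
    rw [hmem] at hx hy ⊢
    have : (a + x) + (a + y) ∈ A + A := Finset.add_mem_add hx hy
    rw [← hvadd, Finset.mem_vadd_finset] at this
    obtain ⟨z, hz, hza⟩ := this
    have : a + (x + y) = z := by
      have hz2 : a + z = a + x + (a + y) := hza
      have h' : a + (a + (x + y)) = a + z := by rw [hz2]; abel
      exact add_left_cancel h'
    rwa [this]
  have hnsmul : ∀ (n : ℕ), ∀ x ∈ H', n • x ∈ H' := by
    intro n x hx
    induction n with
    | zero => simpa using h0
    | succ k ih => rw [succ_nsmul]; exact hadd _ ih _ hx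
  have hneg : ∀ x ∈ H', -x ∈ H' := by
    intro x hx
    have hord : 0 < addOrderOf x := addOrderOf_pos x
    have hzero : addOrderOf x • x = 0 := addOrderOf_nsmul_eq_zero x
    have : -x = (addOrderOf x - 1) • x := by
      have : (addOrderOf x - 1) • x + x = 0 := by
        rw [← succ_nsmul, Nat.sub_add_cancel hord, hzero]
      exact neg_eq_of_add_eq_zero_left this
    rw [this]
    exact hnsmul _ _ hx
  refine ⟨{ carrier := ↑H',
            zero_mem' := h0,
            add_mem' := fun hx hy => hadd _ hx _ hy,
            neg_mem' := fun hx => hneg _ hx }, a, ?_⟩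
  ext x
  simp only [Set.mem_image, AddSubgroup.mem_mk, Finset.mem_coe]
  constructor
  · intro hx
    exact ⟨-a + x, by show -a + x ∈ H'; rw [hmem]; simpa using hx, by abel⟩
  · rintro ⟨y, hy, rfl⟩
    have hy' : y ∈ H' := hy
    rw [hmem] at hy'
    exact hy'
end

section
/- Let G be a finite abelian group of order n ≥ 3 and h a positive integer with 2 ≤ h. Define χ*(G,h) as the least m such that every m-subset A of G \ {0} satisfies hA = G, and χ(G,h) as the least m such that every m-subset A of G satisfies hA = G. Then χ*(G,h) = χ(G,h). -/
open Pointwise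

private lemma univ_smul_eq {G : Type*} [AddCommGroup G] [Fintype G] [DecidableEq G]
    (h : ℕ) (hh : 1 ≤ h) : h • (Finset.univ : Finset G) = Finset.univ := by
  induction h with
  | zero => omega
  | succ k ih =>
    rcases Nat.eq_or_lt_of_le hh with h1 | h1
    · simp [← h1]
    · rw [succ_nsmul, ih (by omega), Finset.univ_add_univ]

private lemma nsmul_singleton {G : Type*} [AddCommGroup G] [DecidableEq G]
    (h : ℕ) (g : G) : h • ({g} : Finset G) = {h • g} := by
  induction h with
  | zero => rw [zero_nsmul, zero_nsmul]; rfl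
  | succ k ih => rw [succ_nsmul, succ_nsmul, ih, Finset.singleton_add_singleton]

private lemma smul_univ_of_eq {G : Type*} [AddCommGroup G] [Fintype G] [DecidableEq G]
    (S : Finset G) (g : G) (hS : S + {g} = Finset.univ) : S = Finset.univ := by
  apply Finset.eq_univ_of_card
  have := congrArg Finset.card hS
  rwa [Finset.card_add_singleton, Finset.card_univ] at this

theorem stmt2 {G : Type*} [AddCommGroup G] [Fintype G] [DecidableEq G]
    (h : ℕ) (hh : 2 ≤ h) (hn : 3 ≤ Fintype.card G) :
    sInf {m : ℕ | ∀ A : Finset G, (0 : G) ∉ A → m ≤ A.card → h • A = Finset.univ}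
      = sInf {m : ℕ | ∀ A : Finset G, m ≤ A.card → h • A = Finset.univ} := by
  congr 1
  ext m
  simp only [Set.mem_setOf_eq]
  constructor
  · intro H A hm
    by_cases hA : A = Finset.univ
    · subst hA; exact univ_smul_eq h (by omega)
    · obtain ⟨x, hx⟩ : ∃ x, x ∉ A := by
        by_contra hc
        push_neg at hc
        exact hA (Finset.eq_univ_iff_forall.2 hc)
      have h0 : (0 : G) ∉ A + ({-x} : Finset G) := by
        rw [Finset.mem_add]
        rintro ⟨a, ha, b, hb, hab⟩
        rw [Finset.mem_singleton] at hb
        subst hb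
        exact hx (by rwa [show a = x by linear_combination (norm := abel_nf) hab] at ha)
      have hcard : m ≤ (A + ({-x} : Finset G)).card := by
        rw [Finset.card_add_singleton]; exact hm
      have hBu := H _ h0 hcard
      rw [nsmul_add, nsmul_singleton] at hBu
      exact smul_univ_of_eq _ _ hBu
  · intro H A _ hm
    exact H A hm
end

section
/- Let G be a finite abelian group of order n whose exponent is at least 3 (i.e., G is not an elementary abelian 2-group), and let L = {x ∈ G : 2x = 0}. Then every subset A ⊆ G with |A| ≥ (n + |L|)/2 + 1 satisfies 2∧A = G, where 2∧A = {a + b : a, b ∈ A, a ≠ b} is the 2-fold restricted sumset. -/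
/-- The `h`-fold restricted sumset of a finite set `A`: all sums of `h`
pairwise distinct elements of `A`. -/
def restSumset {G : Type*} [AddCommMonoid G] [DecidableEq G] (h : ℕ) (A : Finset G) :
    Finset G :=
  (A.powersetCard h).image fun s => s.sum id

/-!
For `c ∈ G`, the sets `A` and `c - A` have at least `2|A| - n` common elements `a`, and each
one writes `c = a + (c - a)` with both summands in `A`. The summands coincide only when
`a + a = c`; the solutions of this equation form a coset of `L` or are absent, so there are
at most `|L|` of them, and `2|A| > n + |L|` leaves a good `a`.
-/

open Finset

section

variable {G : Type*} [AddCommGroup G] [DecidableEq G]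

theorem add_mem_restSumset_two {A : Finset G} {a b : G} (ha : a ∈ A) (hb : b ∈ A)
    (hab : a ≠ b) : a + b ∈ restSumset 2 A := by
  refine mem_image.mpr ⟨{a, b}, mem_powersetCard.mpr ⟨?_, card_pair hab⟩, sum_pair hab⟩
  simp [insert_subset_iff, ha, hb]

section Fintype

variable [Fintype G]

theorem card_filter_add_self_eq_le (c : G) :
    #{x | x + x = c} ≤ #{x : G | x + x = 0} := by
  obtain ⟨x₀, hx₀⟩ | hempty := ({x | x + x = c} : Finset G).eq_empty_or_nonempty.symm
  · refine card_le_card_of_injOn (· - x₀) (fun x hx => ?_) fun _ _ _ _ h => sub_left_injective h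
    have hx : x + x = c := by simpa using hx
    have hx₀ : x₀ + x₀ = c := by simpa using hx₀
    simp [sub_add_sub_comm, hx, hx₀]
  · simp [hempty]

theorem two_mul_card_le_card_add_card_inter_image_sub (c : G) (A : Finset G) :
    2 * #A ≤ Fintype.card G + #(A ∩ A.image (c - ·)) := by
  have himage : #(A.image (c - ·)) = #A := card_image_of_injective _ sub_right_injective
  have := card_inter_add_card_union A (A.image (c - ·))
  have := card_le_univ (A ∪ A.image (c - ·))
  omega

theorem exists_mem_sub_mem_add_self_ne {c : G} {A : Finset G}
    (hA : Fintype.card G + #{x : G | x + x = 0} < 2 * #A) :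
    ∃ a ∈ A, c - a ∈ A ∧ a + a ≠ c := by
  have hsplit := card_filter_add_card_filter_not
    (s := A ∩ A.image (c - ·)) (fun x => x + x = c)
  have hbad : #((A ∩ A.image (c - ·)).filter (fun x => x + x = c)) ≤ #{x : G | x + x = 0} :=
    (card_le_card fun x hx => by simp_all).trans (card_filter_add_self_eq_le c)
  obtain ⟨a, ha⟩ : ((A ∩ A.image (c - ·)).filter (fun x => ¬x + x = c)).Nonempty := by
    have := two_mul_card_le_card_add_card_inter_image_sub c A
    rw [← card_pos]
    omega
  simp only [mem_filter, mem_inter, mem_image] at ha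
  obtain ⟨⟨haA, b, hbA, rfl⟩, hne⟩ := ha
  exact ⟨c - b, haA, by rwa [sub_sub_cancel], hne⟩

end Fintype

end

theorem stmt4_general {G : Type*} [AddCommGroup G] [Fintype G] [DecidableEq G]
    (A : Finset G)
    (hA : (Fintype.card G + (Finset.univ.filter fun x : G => x + x = 0).card) / 2 + 1
        ≤ A.card) :
    restSumset 2 A = Finset.univ := by
  refine eq_univ_of_forall fun c => ?_
  obtain ⟨a, haA, hcaA, hne⟩ := exists_mem_sub_mem_add_self_ne (c := c) (A := A) (by omega)
  have hab : a ≠ c - a := fun h => hne (by rw [← add_sub_cancel a c, ← h])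
  simpa using add_mem_restSumset_two haA hcaA hab

theorem stmt4 {G : Type*} [AddCommGroup G] [Fintype G] [DecidableEq G]
    (hG : ¬ ∀ x : G, x + x = 0)
    (A : Finset G)
    (hA : (Fintype.card G + (Finset.univ.filter fun x : G => x + x = 0).card) / 2 + 1
        ≤ A.card) :
    restSumset 2 A = Finset.univ :=
  stmt4_general A hA
end

section
/- Let G be a finite abelian group of order n, not an elementary abelian 2-group, and let L = {x ∈ G : 2x = 0}. Then there exists a subset A ⊆ G with |A| = (n + |L|)/2 such that 0 ∉ 2∧A, where 2∧A is the set of sums of two distinct elements of A; in particular 2∧A ≠ G. -/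
lemma mem_restSumset_two {G : Type*} [AddCommMonoid G] [DecidableEq G] {A : Finset G} {x : G} :
    x ∈ restSumset 2 A ↔ ∃ a ∈ A, ∃ b ∈ A, a ≠ b ∧ a + b = x := by
  simp only [restSumset, Finset.mem_image, Finset.mem_powersetCard]
  constructor
  · rintro ⟨s, ⟨hs, hc⟩, rfl⟩
    obtain ⟨a, b, hab, rfl⟩ := Finset.card_eq_two.mp hc
    exact ⟨a, hs (by simp), b, hs (by simp), hab, by simp [Finset.sum_pair hab]⟩
  · rintro ⟨a, ha, b, hb, hab, rfl⟩
    exact ⟨{a, b}, ⟨by intro y hy; simp at hy; rcases hy with rfl | rfl <;> assumption,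
      Finset.card_pair hab⟩, by simp [Finset.sum_pair hab]⟩

theorem stmt5 {G : Type*} [AddCommGroup G] [Fintype G] [DecidableEq G]
    (hG : ¬ ∀ x : G, x + x = 0) :
    ∃ A : Finset G,
      A.card = (Fintype.card G + (Finset.univ.filter fun x : G => x + x = 0).card) / 2 ∧
      (0 : G) ∉ restSumset 2 A ∧ restSumset 2 A ≠ Finset.univ := by
  classical
  set e := Fintype.equivFin G with he
  set L : Finset G := Finset.univ.filter fun x : G => x + x = 0 with hL
  set K : Finset G := Finset.univ.filter (fun x : G => x + x ≠ 0 ∧ e x < e (-x)) with hK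
  set K' : Finset G := Finset.univ.filter (fun x : G => x + x ≠ 0 ∧ e (-x) < e x) with hK'
  have key : ∀ x : G, -x + -x = 0 ↔ x + x = 0 := fun x => by rw [← neg_add, neg_eq_zero]
  have hKK' : K' = K.image (fun x => -x) := by
    ext x
    simp only [hK, hK', Finset.mem_image, Finset.mem_filter, Finset.mem_univ, true_and]
    constructor
    · rintro ⟨h1, h2⟩
      exact ⟨-x, ⟨fun h => h1 ((key x).mp h), by simpa using h2⟩, neg_neg x⟩
    · rintro ⟨y, ⟨h1, h2⟩, rfl⟩
      exact ⟨fun h => h1 ((key y).mp h), by simpa using h2⟩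
  have hdisj : Disjoint L K := by
    rw [Finset.disjoint_left]
    intro x hx hx'
    simp only [hL, hK, Finset.mem_filter] at hx hx'
    exact hx'.2.1 hx.2
  have hdisjK : Disjoint (L ∪ K) K' := by
    rw [Finset.disjoint_left]
    intro x hx hx'
    simp only [hL, hK, hK', Finset.mem_filter, Finset.mem_union, Finset.mem_univ, true_and]
      at hx hx'
    rcases hx with h | h
    · exact hx'.1 h
    · exact lt_asymm h.2 hx'.2
  have hunion : L ∪ K ∪ K' = Finset.univ := by
    ext x
    simp only [hL, hK, hK', Finset.mem_union, Finset.mem_filter, Finset.mem_univ, true_and,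
      iff_true]
    by_cases h : x + x = 0
    · left; left; exact h
    · have hne : x ≠ -x := by
        intro hx; apply h; nth_rewrite 2 [hx]; simp
      have : e x ≠ e (-x) := fun hc => hne (e.injective hc)
      rcases this.lt_or_gt with hlt | hlt
      · left; right; exact ⟨h, hlt⟩
      · right; exact ⟨h, hlt⟩
  have hcardK : K'.card = K.card := by
    rw [hKK']
    exact Finset.card_image_of_injective _ neg_injective
  have hcardU : Fintype.card G = L.card + K.card + K.card := by
    rw [← Finset.card_univ, ← hunion, Finset.card_union_of_disjoint hdisjK,
      Finset.card_union_of_disjoint hdisj, hcardK]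
  have contra : ∀ a b : G, a ∈ L ∪ K → b ∈ L ∪ K → a ≠ b → a + b ≠ 0 := by
    intro a b ha hb hab hsum
    have hba : b = -a := eq_neg_of_add_eq_zero_left (by rw [add_comm]; exact hsum)
    simp only [hL, hK, Finset.mem_union, Finset.mem_filter, Finset.mem_univ, true_and]
      at ha hb
    rcases ha with ha | ha
    · have hna : -a = a := neg_eq_of_add_eq_zero_left ha
      exact hab (by rw [hba, hna])
    · rcases hb with hb | hb
      · have hnb : -b = b := neg_eq_of_add_eq_zero_left hb
        apply hab
        rw [hba] at hnb ⊢
        rw [← hnb, neg_neg]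
      · rw [hba] at hb
        rw [neg_neg] at hb
        exact lt_asymm ha.2 hb.2
  refine ⟨L ∪ K, ?_, ?_, ?_⟩
  · rw [Finset.card_union_of_disjoint hdisj, hcardU]
    omega
  · rw [mem_restSumset_two]
    rintro ⟨a, ha, b, hb, hab, hsum⟩
    exact contra a b ha hb hab hsum
  · intro h
    have h0 : (0 : G) ∈ restSumset 2 (L ∪ K) := h ▸ Finset.mem_univ 0
    rw [mem_restSumset_two] at h0
    obtain ⟨a, ha, b, hb, hab, hsum⟩ := h0
    exact contra a b ha hb hab hsum
end

section
/- Let n, h, g be positive integers with 1 ≤ g ≤ h, let d be a positive divisor of n, let i be the remainder of d modulo h, and define f(d) = (⌊(d − 1 − gcd(d,g))/h⌋ + 1)·(n/d). Then: f(d) = (n/h)·(1 + (h−i)/d) if gcd(d,g) < i; f(d) = (n/h)·(1 − h/d) if h divides d and g = h; and f(d) = (n/h)·(1 − i/d) otherwise. -/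
lemma myediv (a b k r : ℤ) (hb : 0 < b) (h : a = b * k + r) (h0 : 0 ≤ r) (h1 : r < b) :
    a / b = k := by
  rw [h, add_comm, Int.add_mul_ediv_left _ _ hb.ne', Int.ediv_eq_zero_of_lt h0 h1, zero_add]

theorem stmt11 (n h g d : ℕ) (hn : 0 < n) (hg1 : 1 ≤ g) (hgh : g ≤ h)
    (hd : d ∣ n) (hd0 : 0 < d) (F : ℚ)
    (hF : F = (((((d : ℤ) - 1 - (Nat.gcd d g : ℤ)) / (h : ℤ) + 1)
        * ((n : ℤ) / (d : ℤ)) : ℤ) : ℚ)) :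
    (Nat.gcd d g < d % h →
        F = (n : ℚ) / (h : ℚ) * (1 + ((h : ℚ) - ((d % h : ℕ) : ℚ)) / (d : ℚ))) ∧
    (h ∣ d → g = h →
        F = (n : ℚ) / (h : ℚ) * (1 - (h : ℚ) / (d : ℚ))) ∧
    (¬ (Nat.gcd d g < d % h) → ¬ (h ∣ d ∧ g = h) →
        F = (n : ℚ) / (h : ℚ) * (1 - ((d % h : ℕ) : ℚ) / (d : ℚ))) := by
  have hh : 0 < h := lt_of_lt_of_le hg1 hgh
  obtain ⟨m, hm⟩ := hd
  have hdiv : (n : ℤ) / (d : ℤ) = (m : ℤ) := by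
    rw [hm]; push_cast; exact Int.mul_ediv_cancel_left _ (by exact_mod_cast hd0.ne')
  set c := Nat.gcd d g with hc
  set i := d % h with hi
  set q := d / h with hq
  have hc1 : 1 ≤ c := Nat.gcd_pos_of_pos_left g hd0
  have hcg : c ≤ g := Nat.le_of_dvd hg1 (Nat.gcd_dvd_right d g)
  have hcd : c ∣ d := Nat.gcd_dvd_left d g
  have hdq : h * q + i = d := Nat.div_add_mod d h
  have hih : i < h := Nat.mod_lt _ hh
  have hdqZ : (h : ℤ) * q + i = d := by exact_mod_cast hdq
  have hmQ : (n : ℚ) = d * m := by exact_mod_cast hm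
  have hdqQ : (h : ℚ) * q + i = d := by exact_mod_cast hdq
  have hhQ : (h : ℚ) ≠ 0 := by positivity
  have hdQ : (d : ℚ) ≠ 0 := by positivity
  refine ⟨?_, ?_, ?_⟩
  · intro hlt
    have key : ((d : ℤ) - 1 - c) / h = q := by
      apply myediv _ _ _ ((i : ℤ) - 1 - c) (by positivity)
      · linarith [hdqZ]
      · have : (c : ℤ) < i := by exact_mod_cast hlt
        omega
      · have : (i : ℤ) < h := by exact_mod_cast hih
        omega
    rw [hF, key, hdiv]
    push_cast
    field_simp
    linear_combination ((m:ℚ)*d)*hdqQ - ((d:ℚ)+h-i)*hmQ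
  · intro hhd hgeq
    have hcval : c = h := by
      rw [hc, hgeq]
      exact Nat.gcd_eq_right hhd
    have hi0 : i = 0 := by
      rw [hi, Nat.mod_eq_zero_of_dvd hhd]
    have hz : (h : ℚ) * q = d := by
      have := hdqQ; rw [hi0] at this; simpa using this
    have key : ((d : ℤ) - 1 - c) / h = (q : ℤ) - 2 := by
      apply myediv _ _ _ ((h : ℤ) - 1) (by positivity)
      · have : (h : ℤ) * q + i = d := hdqZ
        have hi0' : (i : ℤ) = 0 := by exact_mod_cast hi0
        have hcv : (c : ℤ) = h := by exact_mod_cast hcval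
        rw [hcv]; linarith
      · have : (0 : ℤ) < h := by exact_mod_cast hh
        omega
      · omega
    rw [hF, key, hdiv]
    push_cast
    field_simp
    linear_combination ((m:ℚ)*d)*hz - ((d:ℚ)-h)*hmQ
  · intro h1 h2
    have hci : i ≤ c := Nat.le_of_not_lt h1
    have hclt : c < h := by
      rcases Nat.lt_or_ge c h with h3 | h3
      · exact h3
      · exfalso
        have hch : c = h := le_antisymm (le_trans hcg hgh) h3
        have hhd : h ∣ d := hch ▸ hcd
        have hhg : h ∣ g := hch ▸ Nat.gcd_dvd_right d g
        exact h2 ⟨hhd, le_antisymm hgh (Nat.le_of_dvd hg1 hhg)⟩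
    have key : ((d : ℤ) - 1 - c) / h = (q : ℤ) - 1 := by
      apply myediv _ _ _ ((h : ℤ) - 1 - ((c : ℤ) - i)) (by positivity)
      · linarith [hdqZ]
      · have h3 : (c : ℤ) < h := by exact_mod_cast hclt
        have h4 : (0 : ℤ) ≤ i := by positivity
        omega
      · have h3 : (i : ℤ) ≤ c := by exact_mod_cast hci
        have h4 : (0 : ℤ) < h := by exact_mod_cast hh
        omega
    rw [hF, key, hdiv]
    push_cast
    field_simp
    linear_combination ((m:ℚ)*d)*hdqQ - ((d:ℚ)-i)*hmQ
end

section
/- Let n, h, g be positive integers with 1 ≤ g ≤ h, d a positive divisor of n, i = d mod h, and f(d) = (⌊(d − 1 − gcd(d,g))/h⌋ + 1)·(n/d). If gcd(d,g) ≥ i, then f(d) ≤ n/h when g ≠ h, and f(d) ≤ (n−1)/h when g = h. -/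
/-!
Write `d = h q + k` with `k = d mod h`. Since `gcd(d, g) ≥ k`, the numerator `d - 1 - gcd(d, g)`
is below `h q`, so the floor is at most `q - 1` and `f(d) ≤ q (n/d) ≤ n/h`. When `g = h` one
gains the extra `1`: either `k ≥ 1`, so `h q ≤ d - 1`, or `h ∣ d`, so `gcd(d, h) = h` and the
numerator is `d - 1 - h`.
-/

namespace Int

theorem sub_one_sub_ediv_lt_ediv {d c h : ℤ} (hh : 0 < h) (hc : d % h ≤ c) :
    (d - 1 - c) / h < d / h := by
  refine Int.ediv_lt_of_lt_mul hh ?_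
  have := emod_def d h
  linarith

theorem mul_sub_one_sub_ediv_add_one_le {d c h : ℤ} (hh : 0 < h) (hc : d % h ≤ c) :
    h * ((d - 1 - c) / h + 1) ≤ d - d % h :=
  calc h * ((d - 1 - c) / h + 1) ≤ h * (d / h) :=
        mul_le_mul_of_nonneg_left (sub_one_sub_ediv_lt_ediv hh hc) hh.le
    _ = d - d % h := by rw [emod_def]; ring

end Int

theorem mul_sub_one_sub_gcd_ediv_add_one_le_sub_one {d h : ℕ} (hh : 0 < h)
    (hmod : d % h ≤ Nat.gcd d h) :
    (h : ℤ) * (((d : ℤ) - 1 - (Nat.gcd d h : ℤ)) / h + 1) ≤ d - 1 := by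
  have hh' : (0 : ℤ) < h := by exact_mod_cast hh
  rcases Nat.eq_zero_or_pos (d % h) with hk | hk
  · have hgcd : Nat.gcd d h = h := Nat.gcd_eq_right (Nat.dvd_of_mod_eq_zero hk)
    rw [hgcd, mul_add]
    linarith [Int.mul_ediv_self_le (x := (d : ℤ) - 1 - h) hh'.ne']
  · have hk' : (1 : ℤ) ≤ (d : ℤ) % h := by exact_mod_cast hk
    have := Int.mul_sub_one_sub_ediv_add_one_le (d := d) (c := Nat.gcd d h) hh'
      (by exact_mod_cast hmod)
    linarith

theorem intCast_le_div_of_mul_le {a b : ℤ} {h : ℕ} (hh : 0 < h) (hab : a * h ≤ b) :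
    (a : ℚ) ≤ b / h := by
  rw [le_div_iff₀ (by exact_mod_cast hh)]
  exact_mod_cast hab

theorem stmt12_general (n h g d : ℕ) (hn : 0 < n) (hg1 : 1 ≤ g) (hgh : g ≤ h)
    (hd : d ∣ n) (F : ℚ)
    (hF : F = (((((d : ℤ) - 1 - (Nat.gcd d g : ℤ)) / (h : ℤ) + 1)
        * ((n : ℤ) / (d : ℤ)) : ℤ) : ℚ))
    (hgi : d % h ≤ Nat.gcd d g) :
    (g ≠ h → F ≤ (n : ℚ) / (h : ℚ)) ∧
    (g = h → F ≤ ((n : ℚ) - 1) / (h : ℚ)) := by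
  have hh : 0 < h := hg1.trans hgh
  have hd0 : 0 < d := Nat.pos_of_dvd_of_pos hd hn
  obtain ⟨m, rfl⟩ := hd
  have hm : (1 : ℤ) ≤ m := by exact_mod_cast Nat.pos_of_mul_pos_left hn
  rw [Nat.cast_mul, Int.mul_ediv_cancel_left _ (by exact_mod_cast hd0.ne')] at hF
  subst hF
  refine ⟨fun _ => ?_, fun hg => ?_⟩
  · have hfloor := Int.mul_sub_one_sub_ediv_add_one_le (d := d) (h := h) (c := Nat.gcd d g)
      (by exact_mod_cast hh) (by exact_mod_cast hgi)
    have hmod : (0 : ℤ) ≤ (d : ℤ) % h := Int.emod_nonneg _ (by exact_mod_cast hh.ne')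
    refine intCast_le_div_of_mul_le hh ?_
    push_cast
    nlinarith
  · subst hg
    have hfloor := mul_sub_one_sub_gcd_ediv_add_one_le_sub_one hh hgi
    have := intCast_le_div_of_mul_le hh
      (a := (((d : ℤ) - 1 - Nat.gcd d g) / g + 1) * m) (b := (d : ℤ) * m - 1) (by nlinarith)
    push_cast at this ⊢
    exact this

theorem stmt12 (n h g d : ℕ) (hn : 0 < n) (hg1 : 1 ≤ g) (hgh : g ≤ h)
    (hd : d ∣ n) (hd0 : 0 < d) (F : ℚ)
    (hF : F = (((((d : ℤ) - 1 - (Nat.gcd d g : ℤ)) / (h : ℤ) + 1)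
        * ((n : ℤ) / (d : ℤ)) : ℤ) : ℚ))
    (hgi : d % h ≤ Nat.gcd d g) :
    (g ≠ h → F ≤ (n : ℚ) / (h : ℚ)) ∧
    (g = h → F ≤ ((n : ℚ) - 1) / (h : ℚ)) :=
  stmt12_general n h g d hn hg1 hgh hd F hF hgi
end

section
/- Let n and h be positive integers and m = v_1(n,h) + 1 where v_1(n,h) = max over d | n of (⌊(d−2)/h⌋ + 1)·(n/d). Then for every positive divisor d of n, h·⌈m/d⌉ − h + 1 ≥ n/d; that is, u(n, v_1(n,h)+1, h) ≥ n. -/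
/-- The function `v_g(n,h)`: the maximum over positive divisors `d` of `n` of
`(⌊(d - 1 - gcd(d,g))/h⌋ + 1) * (n/d)`. -/
def vFun (g n h : ℕ) : ℤ :=
  (insert 1 n.divisors).sup' (Finset.insert_nonempty _ _) fun d =>
    (((d : ℤ) - 1 - (Nat.gcd d g : ℤ)) / (h : ℤ) + 1) * ((n : ℤ) / (d : ℤ))

/-!
Fix a divisor `d` of `n` and put `k = n / d`. The term of `v_1(n,h)` at the divisor `k` is
`s * d` with `s = ⌊(k - 2)/h⌋ + 1`, so `m > s * d` and hence `⌈m/d⌉ ≥ s + 1`. Since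
`h * s ≥ k - 1`, this gives `h * ⌈m/d⌉ - h + 1 ≥ h * s + 1 ≥ k = n / d`.
-/

lemma le_vFun {g n h k : ℕ} (hk : k ∈ n.divisors) :
    (((k : ℤ) - 1 - (Nat.gcd k g : ℤ)) / (h : ℤ) + 1) * ((n : ℤ) / (k : ℤ)) ≤ vFun g n h :=
  Finset.le_sup' (fun d : ℕ => (((d : ℤ) - 1 - (Nat.gcd d g : ℤ)) / (h : ℤ) + 1) *
    ((n : ℤ) / (d : ℤ))) (Finset.mem_insert_of_mem hk)

lemma le_vFun_one_of_mul_eq {n h k d : ℕ} (hn : n ≠ 0) (hkd : k * d = n) :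
    (((k : ℤ) - 2) / (h : ℤ) + 1) * d ≤ vFun 1 n h := by
  have hk : k ∈ n.divisors := Nat.mem_divisors.mpr ⟨⟨d, hkd.symm⟩, hn⟩
  have hk0 : (k : ℤ) ≠ 0 := by exact_mod_cast Nat.pos_of_mem_divisors hk |>.ne'
  have hnk : (n : ℤ) / k = d := by rw [← hkd, Nat.cast_mul, Int.mul_ediv_cancel_left _ hk0]
  simpa [Nat.gcd_one_right, hnk, sub_sub, one_add_one_eq_two] using le_vFun (g := 1) (h := h) hk

lemma sub_one_le_mul_ediv_sub_two_add_one {h : ℤ} (hh : 0 < h) (k : ℤ) :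
    k - 1 ≤ h * ((k - 2) / h + 1) := by
  have := Int.lt_mul_ediv_self_add (x := k - 2) hh
  linarith

lemma add_one_le_ceil_div {α : Type*} [Field α] [LinearOrder α] [IsStrictOrderedRing α]
    [FloorRing α] {s m : ℤ} {d : α} (hd : 0 < d) (hsm : s * d < m) : s + 1 ≤ ⌈(m : α) / d⌉ :=
  Int.lt_ceil.mpr (by rwa [lt_div_iff₀ hd])

theorem stmt15_general (n h : ℕ) (hh : 0 < h) (m : ℤ) (hm : m = vFun 1 n h + 1) :
    ∀ d ∈ n.divisors, (n : ℤ) / (d : ℤ) ≤ (h : ℤ) * ⌈(m : ℚ) / (d : ℚ)⌉ - (h : ℤ) + 1 := by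
  intro d hd
  obtain ⟨hdn, hn⟩ := Nat.mem_divisors.mp hd
  set k := n / d
  set s : ℤ := ((k : ℤ) - 2) / h + 1
  have hh' : (0 : ℤ) < h := by exact_mod_cast hh
  have hsv : s * d ≤ vFun 1 n h := le_vFun_one_of_mul_eq hn (Nat.div_mul_cancel hdn)
  have hsm : s * d < m := by omega
  have hceil : s + 1 ≤ ⌈(m : ℚ) / d⌉ :=
    add_one_le_ceil_div (by exact_mod_cast Nat.pos_of_mem_divisors hd) (by exact_mod_cast hsm)
  have hks : (k : ℤ) - 1 ≤ h * s := sub_one_le_mul_ediv_sub_two_add_one hh' k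
  rw [← Int.natCast_div]
  nlinarith

theorem stmt15 (n h : ℕ) (hn : 0 < n) (hh : 0 < h) (m : ℤ) (hm : m = vFun 1 n h + 1) :
    ∀ d ∈ n.divisors, (n : ℤ) / (d : ℤ) ≤ (h : ℤ) * ⌈(m : ℚ) / (d : ℚ)⌉ - (h : ℤ) + 1 :=
  stmt15_general n h hh m hm
end

section
/- Let n and h be positive integers, and let v_1(n,h) = max over d | n of (⌊(d−2)/h⌋ + 1)·(n/d). Then u(n, v_1(n,h), h) < n, where u(n,m,h) = min over d | n of (h⌈m/d⌉ − h + 1)·d. In particular there is a divisor d₀ of n with (h⌊(d₀−2)/h⌋ + 1)·(n/d₀) ≤ n − n/d₀ < n. -/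
theorem exists_mem_divisors_vFun_eq (g : ℕ) {n : ℕ} (hn : n ≠ 0) (h : ℕ) :
    ∃ d ∈ n.divisors,
      vFun g n h = (((d : ℤ) - 1 - (Nat.gcd d g : ℤ)) / (h : ℤ) + 1) * ((n : ℤ) / (d : ℤ)) := by
  obtain ⟨d, hd, hmax⟩ := Finset.exists_mem_eq_sup' (Finset.insert_nonempty 1 n.divisors)
    fun d : ℕ => (((d : ℤ) - 1 - (Nat.gcd d g : ℤ)) / (h : ℤ) + 1) * ((n : ℤ) / (d : ℤ))
  rw [Finset.insert_eq_self.mpr (Nat.one_mem_divisors.mpr hn)] at hd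
  exact ⟨d, hd, hmax⟩

theorem exists_mem_divisors_vFun_one_eq {n : ℕ} (hn : n ≠ 0) (h : ℕ) :
    ∃ d ∈ n.divisors, vFun 1 n h = (((d : ℤ) - 2) / (h : ℤ) + 1) * ((n : ℤ) / (d : ℤ)) := by
  obtain ⟨d, hd, hv⟩ := exists_mem_divisors_vFun_eq 1 hn h
  refine ⟨d, hd, ?_⟩
  rw [hv, Nat.gcd_one_right, Nat.cast_one, sub_sub, one_add_one_eq_two]

theorem mul_ediv_sub_two_add_one_mul_ediv_le {n d : ℕ} (hd : d ∣ n) {h : ℤ} (hh : h ≠ 0) :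
    (h * (((d : ℤ) - 2) / h) + 1) * ((n : ℤ) / d) ≤ n - n / d := by
  have hfloor : h * (((d : ℤ) - 2) / h) ≤ d - 2 := Int.mul_ediv_self_le hh
  have hk : (0 : ℤ) ≤ n / d := Int.ediv_nonneg (Int.natCast_nonneg n) (Int.natCast_nonneg d)
  have hn : (n : ℤ) / d * d = n := Int.ediv_mul_cancel (Int.natCast_dvd_natCast.mpr hd)
  nlinarith

theorem stmt16 (n h : ℕ) (hn : 0 < n) (hh : 0 < h) (m : ℤ) (hm : m = vFun 1 n h) :
    (n.divisors.inf' (Nat.nonempty_divisors.mpr hn.ne')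
        (fun d => ((h : ℤ) * ⌈(m : ℚ) / (d : ℚ)⌉ - (h : ℤ) + 1) * (d : ℤ))) < (n : ℤ) ∧
    ∃ d₀ ∈ n.divisors,
      ((h : ℤ) * (((d₀ : ℤ) - 2) / (h : ℤ)) + 1) * ((n : ℤ) / (d₀ : ℤ))
        ≤ (n : ℤ) - (n : ℤ) / (d₀ : ℤ) := by
  obtain ⟨d₀, hd₀, hv⟩ := exists_mem_divisors_vFun_one_eq hn.ne' h
  have hdvd : d₀ ∣ n := Nat.dvd_of_mem_divisors hd₀
  have hbound := mul_ediv_sub_two_add_one_mul_ediv_le hdvd (h := h) (by exact_mod_cast hh.ne')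
  set q : ℤ := ((d₀ : ℤ) - 2) / h
  have hk : 0 < n / d₀ := Nat.div_pos (Nat.le_of_dvd hn hdvd) (Nat.pos_of_mem_divisors hd₀)
  have hceil : ⌈(m : ℚ) / ((n / d₀ : ℕ) : ℚ)⌉ = q + 1 := by
    rw [hm, hv, ← Int.natCast_div, Int.cast_mul, Int.cast_natCast,
      mul_div_cancel_right₀ _ (by exact_mod_cast hk.ne'), Int.ceil_intCast]
  refine ⟨?_, d₀, hd₀, hbound⟩
  calc _ ≤ ((h : ℤ) * ⌈(m : ℚ) / ((n / d₀ : ℕ) : ℚ)⌉ - h + 1) * ((n / d₀ : ℕ) : ℤ) :=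
        Finset.inf'_le _ (Nat.mem_divisors.mpr ⟨Nat.div_dvd_of_dvd hdvd, hn.ne'⟩)
    _ = (h * q + 1) * ((n : ℤ) / d₀) := by rw [hceil, Int.natCast_div]; ring
    _ ≤ n - n / d₀ := hbound
    _ < n := by rw [← Int.natCast_div]; omega
end

section
/- Let n ≥ 12 be even and h = n/2 − 1. Then the restricted h-critical number of Z_n equals n/2 + 2: every subset of Z_n of size n/2 + 2 has h-fold restricted sumset equal to Z_n, but there exists a subset of size n/2 + 1 whose h-fold restricted sumset is a proper subset of Z_n. -/
lemma mem_restSumset {G : Type*} [AddCommMonoid G] [DecidableEq G] {h : ℕ} {A : Finset G}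
    {c : G} : c ∈ restSumset h A ↔ ∃ s : Finset G, s ⊆ A ∧ s.card = h ∧ s.sum id = c := by
  simp [restSumset, Finset.mem_powersetCard, and_assoc]

lemma restSumset_compl {G : Type*} [AddCommGroup G] [DecidableEq G] (h : ℕ) (A : Finset G)
    (hle : h ≤ A.card) :
    restSumset (A.card - h) A = (restSumset h A).image (fun x => A.sum id - x) := by
  ext c
  simp only [Finset.mem_image, mem_restSumset]
  constructor
  · rintro ⟨s, hs, hcard, rfl⟩
    refine ⟨(A \ s).sum id, ⟨A \ s, Finset.sdiff_subset, ?_, rfl⟩, ?_⟩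
    · rw [Finset.card_sdiff_of_subset hs, hcard]; omega
    · have := Finset.sum_sdiff (f := id) hs
      rw [← this]; abel
  · rintro ⟨x, ⟨s, hs, hcard, rfl⟩, rfl⟩
    refine ⟨A \ s, Finset.sdiff_subset, ?_, ?_⟩
    · rw [Finset.card_sdiff_of_subset hs, hcard]
    · have := Finset.sum_sdiff (f := id) hs
      rw [← this]; abel

lemma fiber_card (n : ℕ) [NeZero n] (heven : 2 ∣ n) (p : ZMod 2) :
    (Finset.univ.filter fun x : ZMod n => ZMod.castHom heven (ZMod 2) x = p).card = n / 2 := by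
  set φ := ZMod.castHom heven (ZMod 2) with hφ
  have hEO : (Finset.univ.filter fun x : ZMod n => φ x = 1)
      = (Finset.univ.filter fun x : ZMod n => φ x = 0).image (· + 1) := by
    ext x
    simp only [Finset.mem_image, Finset.mem_filter, Finset.mem_univ, true_and]
    constructor
    · intro hx
      exact ⟨x - 1, by rw [map_sub, hx, map_one, sub_self], by ring⟩
    · rintro ⟨y, hy, rfl⟩
      rw [map_add, hy, map_one, zero_add]
  have hcardeq : (Finset.univ.filter fun x : ZMod n => φ x = 1).card
      = (Finset.univ.filter fun x : ZMod n => φ x = 0).card := by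
    rw [hEO, Finset.card_image_of_injective _ (add_left_injective 1)]
  have hne : ∀ q : ZMod 2, (q = 1) ↔ ¬ (q = 0) := by decide
  have hsum : (Finset.univ.filter fun x : ZMod n => φ x = 0).card
      + (Finset.univ.filter fun x : ZMod n => φ x = 1).card = n := by
    have := Finset.card_filter_add_card_filter_not
      (s := (Finset.univ : Finset (ZMod n))) (p := fun x => φ x = 0)
    rw [Finset.card_univ, ZMod.card] at this
    have heq : (Finset.univ.filter fun x : ZMod n => φ x = 1)
        = (Finset.univ.filter fun x : ZMod n => ¬ φ x = 0) := by
      apply Finset.filter_congr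
      intro x _
      simp [hne]
    rw [heq]
    exact this
  have h01 : ∀ q : ZMod 2, q = 0 ∨ q = 1 := by decide
  rcases h01 p with rfl | rfl <;> omega

theorem stmt19 (n : ℕ) [NeZero n] (hn : 12 ≤ n) (heven : 2 ∣ n)
    (h : ℕ) (hh : h = n / 2 - 1) :
    (∀ B : Finset (ZMod n), B.card = n / 2 + 2 → restSumset h B = Finset.univ) ∧
    (∃ A : Finset (ZMod n), A.card = n / 2 + 1 ∧ restSumset h A ≠ Finset.univ) := by
  set φ := ZMod.castHom heven (ZMod 2) with hφ
  have hcardZ : Fintype.card (ZMod n) = n := ZMod.card n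
  constructor
  · -- every B of card n/2+2 has full h-fold restricted sumset
    intro B hB
    -- first: restSumset 3 B = univ
    have h3full : restSumset 3 B = Finset.univ := by
      apply Finset.eq_univ_of_forall
      intro c
      -- choose z ∈ B with φ z ≠ φ c
      obtain ⟨z, hzB, hzc⟩ : ∃ z ∈ B, φ z ≠ φ c := by
        by_contra hcon
        push_neg at hcon
        have hsub : B ⊆ Finset.univ.filter fun x : ZMod n => φ x = φ c := by
          intro x hx
          simp [hcon x hx]
        have := Finset.card_le_card hsub
        rw [hB, fiber_card n heven] at this
        omega
      set B' := B.erase z with hB'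
      have hB'card : B'.card = n / 2 + 1 := by
        rw [hB', Finset.card_erase_of_mem hzB, hB]
        omega
      set t := c - z with ht
      have hφt : φ t ≠ 0 := by
        rw [ht, map_sub]
        intro hcc
        have : φ z = φ c := by linear_combination -hcc
        exact hzc this
      set C := B'.image (fun x => t - x) with hC
      have hCcard : C.card = n / 2 + 1 := by
        rw [hC, Finset.card_image_of_injective _ sub_right_injective, hB'card]
      have hinter : 0 < (B' ∩ C).card := by
        have h1 : (B' ∪ C).card + (B' ∩ C).card = B'.card + C.card :=
          Finset.card_union_add_card_inter B' C
        have h2 : (B' ∪ C).card ≤ n := by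
          have := Finset.card_le_univ (B' ∪ C)
          rwa [hcardZ] at this
        omega
      obtain ⟨x, hxI⟩ := Finset.card_pos.mp hinter
      rw [Finset.mem_inter] at hxI
      obtain ⟨hxB', hxC⟩ := hxI
      obtain ⟨y, hyB', hyx⟩ := Finset.mem_image.mp hxC
      have htxB' : t - x ∈ B' := by
        have : t - x = y := by rw [← hyx]; ring
        rwa [this]
      have hxne : x ≠ t - x := by
        intro hxx
        apply hφt
        have : t = x + x := by rw [hxx] at *; linear_combination -hxx
        rw [this, map_add]
        have : ∀ q : ZMod 2, q + q = 0 := by decide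
        exact this _
      have hxz : x ≠ z := Finset.ne_of_mem_erase hxB'
      have htxz : t - x ≠ z := Finset.ne_of_mem_erase htxB'
      -- the 3-element set
      refine mem_restSumset.mpr ⟨{z, x, t - x}, ?_, ?_, ?_⟩
      · intro w hw
        simp only [Finset.mem_insert, Finset.mem_singleton] at hw
        rcases hw with rfl | rfl | rfl
        · exact hzB
        · exact Finset.mem_of_mem_erase hxB'
        · exact Finset.mem_of_mem_erase htxB'
      · rw [Finset.card_insert_of_notMem, Finset.card_insert_of_notMem, Finset.card_singleton]
        · simp [hxne]
        · simp only [Finset.mem_insert, Finset.mem_singleton]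
          push_neg
          exact ⟨fun hz => hxz hz.symm, fun hz => htxz hz.symm⟩
      · rw [Finset.sum_insert, Finset.sum_insert, Finset.sum_singleton]
        · simp only [id]; rw [ht]; ring
        · simp [hxne]
        · simp only [Finset.mem_insert, Finset.mem_singleton]
          push_neg
          exact ⟨fun hz => hxz hz.symm, fun hz => htxz hz.symm⟩
    -- now transfer via complement symmetry
    have hle : h ≤ B.card := by omega
    have h3 : B.card - h = 3 := by omega
    have hsym := restSumset_compl h B hle
    rw [h3, h3full] at hsym
    apply Finset.eq_univ_of_card
    have hle2 : Fintype.card (ZMod n) ≤ (restSumset h B).card := by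
      calc Fintype.card (ZMod n) = (Finset.univ : Finset (ZMod n)).card := (Finset.card_univ).symm
        _ = ((restSumset h B).image (fun x => B.sum id - x)).card := by rw [hsym]
        _ ≤ (restSumset h B).card := Finset.card_image_le
    exact le_antisymm (Finset.card_le_univ _) hle2
  · -- the example A = {0, 1, ..., n/2}
    set A := (Finset.range (n / 2 + 1)).image (Nat.cast : ℕ → ZMod n) with hA
    have hinj : Set.InjOn (Nat.cast : ℕ → ZMod n) (Finset.range (n / 2 + 1)) := by
      intro a ha b hb hab
      simp only [Finset.coe_range, Set.mem_Iio] at ha hb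
      have ha' : a < n := by omega
      have hb' : b < n := by omega
      have := congrArg ZMod.val hab
      rwa [ZMod.val_cast_of_lt ha', ZMod.val_cast_of_lt hb'] at this
    have hAcard : A.card = n / 2 + 1 := by
      rw [hA, Finset.card_image_of_injOn hinj, Finset.card_range]
    refine ⟨A, hAcard, ?_⟩
    intro hfull
    -- then restSumset 2 A = univ, so 0 ∈ restSumset 2 A
    have hle : h ≤ A.card := by omega
    have h2 : A.card - h = 2 := by omega
    have hsym := restSumset_compl h A hle
    rw [h2, hfull] at hsym
    have h0 : (0 : ZMod n) ∈ restSumset 2 A := by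
      rw [hsym]
      exact Finset.mem_image.mpr ⟨A.sum id, Finset.mem_univ _, by ring⟩
    obtain ⟨s, hsA, hscard, hssum⟩ := mem_restSumset.mp h0
    obtain ⟨a, b, hab, rfl⟩ := Finset.card_eq_two.mp hscard
    have haA := hsA (Finset.mem_insert_self a {b})
    have hbA := hsA (Finset.mem_insert_of_mem (Finset.mem_singleton_self b))
    obtain ⟨i, hi, rfl⟩ := Finset.mem_image.mp (hA ▸ haA)
    obtain ⟨j, hj, rfl⟩ := Finset.mem_image.mp (hA ▸ hbA)
    rw [Finset.mem_range] at hi hj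
    have hij : i ≠ j := fun hij => hab (by rw [hij])
    have hsum0 : ((i + j : ℕ) : ZMod n) = 0 := by
      rw [Finset.sum_insert (by simpa using hab), Finset.sum_singleton] at hssum
      push_cast
      simpa using hssum
    have hdvd : n ∣ i + j := (ZMod.natCast_eq_zero_iff _ _).mp hsum0
    have hlt : i + j < n := by omega
    have hpos : 0 < i + j := by omega
    have := Nat.le_of_dvd hpos hdvd
    omega
end
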